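/- Product of block-encoded unitaries with subnormalization 1: if U is a (1, a, delta)-block-encoding of an s-qubit unitary A and V is a (1, a, epsilon)-block-encoding of an s-qubit unitary B (using the same a ancillas), then UV is a (1, a, delta + epsilon + 2*sqrt(delta*epsilon))-block-encoding of AB. -/

import Mathlib

/-- The ℓ²-operator norm of a complex matrix (as a map on Euclidean space). -/
noncomputable def opNorm {ι : Type*} [Fintype ι] [DecidableEq ι] (M : Matrix ι ι ℂ) : ℝ :=
  ‖Matrix.toEuclideanCLM (𝕜 := ℂ) M‖

/-- The upper-left corner `(⟨0|^{⊗a} ⊗ I) U (|0⟩^{⊗a} ⊗ I)` of a unitary on ancilla × system,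
with distinguished ancilla basis state `z`. -/
noncomputable def corner {α ι : Type*} [Fintype α] [Fintype ι] [DecidableEq α] [DecidableEq ι]
    (z : α) (U : Matrix (α × ι) (α × ι) ℂ) : Matrix ι ι ℂ :=
  Matrix.of fun i j => U (z, i) (z, j)

/-- `U` is an `(a, e)`-block-encoding of `A` (with subnormalization `a` and error `e`):
`U` is unitary and `‖A - a · (⟨0| ⊗ I) U (|0⟩ ⊗ I)‖ ≤ e` in ℓ²-operator norm. -/
def IsBlockEncoding {α ι : Type*} [Fintype α] [Fintype ι] [DecidableEq α] [DecidableEq ι]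
    (z : α) (U : Matrix (α × ι) (α × ι) ℂ) (A : Matrix ι ι ℂ) (a e : ℝ) : Prop :=
  U ∈ Matrix.unitaryGroup (α × ι) ℂ ∧ opNorm (A - (a : ℂ) • corner z U) ≤ e

/-! With `E = |0⟩ ⊗ I` and `P = E Eᴴ`, inserting `I = P + (1 - P)` between `U` and `V` gives
`Eᴴ U V E = Ũ Ṽ + X Y`, where `Ũ = Eᴴ U E`, `Ṽ = Eᴴ V E`, `X = Eᴴ U (1 - P)` and `Y = (1 - P) V E`.
Unitarity of `U` gives `X Xᴴ = 1 - Ũ Ũᴴ`, and since `Ũ` is `δ`-close to the unitary `A` this has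
norm at most `2δ`; hence `‖X‖ ≤ √(2δ)` and likewise `‖Y‖ ≤ √(2ε)`. Then
`A B - Eᴴ U V E = (A - Ũ) B + Ũ (B - Ṽ) - X Y` has norm at most `δ + ε + 2√(δε)`. -/

open Matrix
open scoped Matrix.Norms.L2Operator

lemma mul_le_two_mul_sqrt_mul {x y δ ε : ℝ} (hx : 0 ≤ x) (hy : 0 ≤ y) (hxδ : x * x ≤ 2 * δ)
    (hyε : y * y ≤ 2 * ε) : x * y ≤ 2 * √(δ * ε) := by
  have hδ : 0 ≤ δ := by nlinarith
  have hsq : (x * y) ^ 2 ≤ 4 * (δ * ε) := by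
    have := mul_le_mul hxδ hyε (mul_self_nonneg y) (by linarith)
    nlinarith
  calc x * y ≤ √(4 * (δ * ε)) := (Real.le_sqrt (mul_nonneg hx hy) (by nlinarith)).mpr hsq
    _ = 2 * √(δ * ε) := by
        rw [Real.sqrt_mul (by norm_num), show (4 : ℝ) = 2 ^ 2 by norm_num,
          Real.sqrt_sq (by norm_num)]

namespace Matrix

variable {m n : Type*} [Fintype m] [Fintype n] [DecidableEq n]

lemma l2_opNorm_one_le : ‖(1 : Matrix n n ℂ)‖ ≤ 1 := by
  rw [← l2_opNorm_toEuclideanCLM, map_one]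
  exact ContinuousLinearMap.norm_id_le

lemma l2_opNorm_le_one_of_conjTranspose_mul_self_eq_one {E : Matrix m n ℂ} (hE : Eᴴ * E = 1) :
    ‖E‖ ≤ 1 := by
  have h := l2_opNorm_conjTranspose_mul_self E
  rw [hE] at h
  nlinarith [norm_nonneg E, l2_opNorm_one_le (n := n)]

lemma l2_opNorm_le_one_of_mem_unitaryGroup {W : Matrix n n ℂ} (hW : W ∈ unitaryGroup n ℂ) :
    ‖W‖ ≤ 1 :=
  l2_opNorm_le_one_of_conjTranspose_mul_self_eq_one (mem_unitaryGroup_iff'.mp hW)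

lemma l2_opNorm_compression_le_one [DecidableEq m] {E : Matrix m n ℂ} (hE : Eᴴ * E = 1)
    {W : Matrix m m ℂ} (hW : ‖W‖ ≤ 1) : ‖Eᴴ * W * E‖ ≤ 1 := by
  have hE₁ := l2_opNorm_le_one_of_conjTranspose_mul_self_eq_one hE
  calc ‖Eᴴ * W * E‖ ≤ ‖Eᴴ‖ * ‖W‖ * ‖E‖ :=
        (l2_opNorm_mul _ _).trans (mul_le_mul_of_nonneg_right (l2_opNorm_mul _ _) (norm_nonneg _))
    _ ≤ 1 := by
        rw [l2_opNorm_conjTranspose]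
        exact mul_le_one₀ (mul_le_one₀ hE₁ (norm_nonneg _) hW) (norm_nonneg _) hE₁

lemma l2_opNorm_one_sub_mul_conjTranspose_le {A C : Matrix n n ℂ} (hA : A ∈ unitaryGroup n ℂ)
    (hC : ‖C‖ ≤ 1) : ‖1 - C * Cᴴ‖ ≤ 2 * ‖A - C‖ := by
  have hAA : A * Aᴴ = 1 := mem_unitaryGroup_iff.mp hA
  have hdefect : 1 - C * Cᴴ = (A - C) * Aᴴ + C * (A - C)ᴴ := by
    rw [conjTranspose_sub, sub_mul, mul_sub, hAA]
    abel
  rw [hdefect]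
  calc ‖(A - C) * Aᴴ + C * (A - C)ᴴ‖ ≤ ‖A - C‖ * ‖Aᴴ‖ + ‖C‖ * ‖(A - C)ᴴ‖ :=
        (norm_add_le _ _).trans (add_le_add (l2_opNorm_mul _ _) (l2_opNorm_mul _ _))
    _ ≤ 2 * ‖A - C‖ := by
        rw [l2_opNorm_conjTranspose, l2_opNorm_conjTranspose]
        nlinarith [norm_nonneg (A - C), l2_opNorm_le_one_of_mem_unitaryGroup hA]

lemma isIdempotentElem_mul_conjTranspose [DecidableEq m] {E : Matrix m n ℂ} (hE : Eᴴ * E = 1) :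
    IsIdempotentElem (E * Eᴴ) := by
  rw [IsIdempotentElem, Matrix.mul_assoc, ← Matrix.mul_assoc Eᴴ, hE, Matrix.one_mul]

lemma compression_mul [DecidableEq m] {E : Matrix m n ℂ} (hE : Eᴴ * E = 1) (U V : Matrix m m ℂ) :
    Eᴴ * (U * V) * E =
      Eᴴ * U * E * (Eᴴ * V * E) + Eᴴ * U * (1 - E * Eᴴ) * ((1 - E * Eᴴ) * V * E) := by
  have hsplit : Eᴴ * U * (1 - E * Eᴴ) * ((1 - E * Eᴴ) * V * E) =
      Eᴴ * U * ((1 - E * Eᴴ) * (1 - E * Eᴴ)) * V * E := by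
    simp only [Matrix.mul_assoc]
  rw [hsplit, (isIdempotentElem_mul_conjTranspose hE).one_sub.eq]
  simp only [Matrix.mul_sub, Matrix.sub_mul, Matrix.mul_one, Matrix.mul_assoc]
  abel

lemma l2_opNorm_mul_self_offCorner_le [DecidableEq m] {E : Matrix m n ℂ} (hE : Eᴴ * E = 1)
    {W : Matrix m m ℂ} (hW : W ∈ unitaryGroup m ℂ) {A : Matrix n n ℂ} (hA : A ∈ unitaryGroup n ℂ) :
    ‖Eᴴ * W * (1 - E * Eᴴ)‖ * ‖Eᴴ * W * (1 - E * Eᴴ)‖ ≤ 2 * ‖A - Eᴴ * W * E‖ := by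
  set X := Eᴴ * W * (1 - E * Eᴴ)
  have hWW : W * (Wᴴ * E) = E := by
    rw [← Matrix.mul_assoc, ← star_eq_conjTranspose, mem_unitaryGroup_iff.mp hW, Matrix.one_mul]
  have hXX : X * Xᴴ = 1 - Eᴴ * W * E * (Eᴴ * W * E)ᴴ := by
    have hQ : (1 - E * Eᴴ)ᴴ = 1 - E * Eᴴ := by simp [conjTranspose_sub]
    calc X * Xᴴ = Eᴴ * W * ((1 - E * Eᴴ) * (1 - E * Eᴴ)) * Wᴴ * E := by
          simp only [X, conjTranspose_mul, hQ, conjTranspose_conjTranspose, Matrix.mul_assoc]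
      _ = 1 - Eᴴ * W * E * (Eᴴ * W * E)ᴴ := by
          rw [(isIdempotentElem_mul_conjTranspose hE).one_sub.eq]
          simp only [conjTranspose_mul, conjTranspose_conjTranspose, Matrix.mul_sub, Matrix.sub_mul,
            Matrix.mul_one, Matrix.mul_assoc, hWW, hE]
  calc ‖X‖ * ‖X‖ = ‖X * Xᴴ‖ := by
        rw [← l2_opNorm_conjTranspose X, ← l2_opNorm_conjTranspose_mul_self Xᴴ,
          conjTranspose_conjTranspose]
    _ ≤ 2 * ‖A - Eᴴ * W * E‖ := by
        rw [hXX]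
        exact l2_opNorm_one_sub_mul_conjTranspose_le hA
          (l2_opNorm_compression_le_one hE (l2_opNorm_le_one_of_mem_unitaryGroup hW))

theorem l2_opNorm_mul_sub_compression_mul_le [DecidableEq m] {E : Matrix m n ℂ} (hE : Eᴴ * E = 1)
    {U V : Matrix m m ℂ} (hU : U ∈ unitaryGroup m ℂ) (hV : V ∈ unitaryGroup m ℂ)
    {A B : Matrix n n ℂ} (hA : A ∈ unitaryGroup n ℂ) (hB : B ∈ unitaryGroup n ℂ) {δ ε : ℝ}
    (hAU : ‖A - Eᴴ * U * E‖ ≤ δ) (hBV : ‖B - Eᴴ * V * E‖ ≤ ε) :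
    ‖A * B - Eᴴ * (U * V) * E‖ ≤ δ + ε + 2 * √(δ * ε) := by
  rw [compression_mul hE]
  have hsplit : A * B -
        (Eᴴ * U * E * (Eᴴ * V * E) + Eᴴ * U * (1 - E * Eᴴ) * ((1 - E * Eᴴ) * V * E)) =
      (A - Eᴴ * U * E) * B + Eᴴ * U * E * (B - Eᴴ * V * E) -
        Eᴴ * U * (1 - E * Eᴴ) * ((1 - E * Eᴴ) * V * E) := by
    rw [sub_mul A, mul_sub (Eᴴ * U * E) B]
    abel
  rw [hsplit]
  set X := Eᴴ * U * (1 - E * Eᴴ)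
  set Y := (1 - E * Eᴴ) * V * E
  have hX : ‖X‖ * ‖X‖ ≤ 2 * δ := (l2_opNorm_mul_self_offCorner_le hE hU hA).trans (by linarith)
  -- `Yᴴ` is the off-corner block of `Vᴴ`, which is `ε`-close to the unitary `Bᴴ` on the corner.
  have hY : ‖Y‖ * ‖Y‖ ≤ 2 * ε := by
    have h := l2_opNorm_mul_self_offCorner_le hE (Unitary.star_mem hV) (Unitary.star_mem hB)
    have hYX : Eᴴ * star V * (1 - E * Eᴴ) = Yᴴ := by
      simp [Y, conjTranspose_sub, star_eq_conjTranspose, Matrix.mul_assoc]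
    have hBV' : star B - Eᴴ * star V * E = (B - Eᴴ * V * E)ᴴ := by
      simp [conjTranspose_sub, star_eq_conjTranspose, Matrix.mul_assoc]
    rw [hYX, hBV', l2_opNorm_conjTranspose, l2_opNorm_conjTranspose] at h
    linarith
  have hXY : ‖X * Y‖ ≤ 2 * √(δ * ε) :=
    (l2_opNorm_mul X Y).trans (mul_le_two_mul_sqrt_mul (norm_nonneg _) (norm_nonneg _) hX hY)
  have hUc : ‖Eᴴ * U * E‖ ≤ 1 :=
    l2_opNorm_compression_le_one hE (l2_opNorm_le_one_of_mem_unitaryGroup hU)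
  have hB₁ := l2_opNorm_le_one_of_mem_unitaryGroup hB
  calc _ ≤ ‖A - Eᴴ * U * E‖ * ‖B‖ + ‖Eᴴ * U * E‖ * ‖B - Eᴴ * V * E‖ + ‖X * Y‖ :=
        (norm_sub_le _ _).trans (add_le_add_left ((norm_add_le _ _).trans
          (add_le_add (l2_opNorm_mul _ _) (l2_opNorm_mul _ _))) _)
    _ ≤ δ + ε + 2 * √(δ * ε) := by
        nlinarith [norm_nonneg (A - Eᴴ * U * E), norm_nonneg (B - Eᴴ * V * E)]

end Matrix

/-- The isometry `|z⟩ ⊗ I` from the system into ancilla × system. -/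
def ancillaEmbedding {α : Type*} (ι : Type*) [DecidableEq α] [DecidableEq ι] (z : α) :
    Matrix (α × ι) ι ℂ :=
  (1 : Matrix (α × ι) (α × ι) ℂ).submatrix id (Prod.mk z)

section BlockEncoding

variable {α ι : Type*} [Fintype α] [Fintype ι] [DecidableEq α] [DecidableEq ι]

lemma conjTranspose_ancillaEmbedding_mul_self (z : α) :
    (ancillaEmbedding ι z)ᴴ * ancillaEmbedding ι z = 1 := by
  ext i j
  simp [ancillaEmbedding, mul_apply, one_apply]

lemma corner_eq_conjTranspose_mul_mul (z : α) (M : Matrix (α × ι) (α × ι) ℂ) :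
    corner z M = (ancillaEmbedding ι z)ᴴ * M * ancillaEmbedding ι z := by
  ext i j
  simp [corner, ancillaEmbedding, mul_apply, one_apply, conjTranspose_submatrix]

lemma isBlockEncoding_one_iff (z : α) (U : Matrix (α × ι) (α × ι) ℂ) (A : Matrix ι ι ℂ) (e : ℝ) :
    IsBlockEncoding z U A 1 e ↔
      U ∈ unitaryGroup (α × ι) ℂ ∧
        ‖A - (ancillaEmbedding ι z)ᴴ * U * ancillaEmbedding ι z‖ ≤ e := by
  rw [IsBlockEncoding, opNorm, l2_opNorm_toEuclideanCLM, Complex.ofReal_one, one_smul,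
    corner_eq_conjTranspose_mul_mul]

theorem IsBlockEncoding.mul {z : α} {U V : Matrix (α × ι) (α × ι) ℂ} {A B : Matrix ι ι ℂ}
    {δ ε : ℝ} (hU : IsBlockEncoding z U A 1 δ) (hV : IsBlockEncoding z V B 1 ε)
    (hA : A ∈ unitaryGroup ι ℂ) (hB : B ∈ unitaryGroup ι ℂ) :
    IsBlockEncoding z (U * V) (A * B) 1 (δ + ε + 2 * √(δ * ε)) := by
  rw [isBlockEncoding_one_iff] at hU hV ⊢
  exact ⟨mul_mem hU.1 hV.1, l2_opNorm_mul_sub_compression_mul_le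
    (conjTranspose_ancillaEmbedding_mul_self z) hU.1 hV.1 hA hB hU.2 hV.2⟩

end BlockEncoding

/-- Product of block-encoded unitaries with subnormalization 1: if `U` is a
`(1, a, δ)`-block-encoding of an `s`-qubit unitary `A` and `V` is a
`(1, a, ε)`-block-encoding of an `s`-qubit unitary `B` (same `a` ancillas), then `U * V`
is a `(1, a, δ + ε + 2√(δε))`-block-encoding of `A * B`. -/
theorem product_of_unitary_block_encodings (a s : ℕ) (δ ε : ℝ)
    (U V : Matrix (Fin (2 ^ a) × Fin (2 ^ s)) (Fin (2 ^ a) × Fin (2 ^ s)) ℂ)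
    (A B : Matrix (Fin (2 ^ s)) (Fin (2 ^ s)) ℂ)
    (hA : A ∈ Matrix.unitaryGroup (Fin (2 ^ s)) ℂ)
    (hB : B ∈ Matrix.unitaryGroup (Fin (2 ^ s)) ℂ)
    (hU : IsBlockEncoding (0 : Fin (2 ^ a)) U A 1 δ)
    (hV : IsBlockEncoding (0 : Fin (2 ^ a)) V B 1 ε) :
    IsBlockEncoding (0 : Fin (2 ^ a)) (U * V) (A * B) 1 (δ + ε + 2 * Real.sqrt (δ * ε)) :=
  hU.mul hV hA hB
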